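/- arXiv:2310.17730 — 2 statements merged into one kernel-verified Lean document; each statement's English description precedes it below -/
import Mathlib

section
/- Let n be a positive integer divisible by 4, and let G be a graph with 𝓑 = (B_1, ..., B_n) a rainbow (2 choose 2)-free blockade in G of width W. Then there exist disjoint sets A, B ⊆ B_1 ∪ ... ∪ B_n with |A| ≥ W·n/4 and |B| ≥ W·n/4 such that A is anticomplete to B. (Take L = B_1 ∪ ... ∪ B_{n/4}, R = B_{n/4+1} ∪ ... ∪ B_{n/2}; every vertex of the remaining blocks is anticomplete to L or to R, so one of the corresponding two sets has at least half of the remaining vertices.) -/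
/-- `(a 0, ..., a (k-1))` has the `(k choose 2)`-property over `X`: there are witnesses
`b i j ∈ X` (for `i < j`) adjacent to `a i` and `a j` and non-adjacent to every other `a m`. -/
def HasKC2Prop {V : Type} (G : SimpleGraph V) {k : ℕ} (a : Fin k → V) (X : Set V) : Prop :=
  ∃ b : Fin k → Fin k → V, ∀ i j : Fin k, i < j →
    b i j ∈ X ∧ G.Adj (b i j) (a i) ∧ G.Adj (b i j) (a j) ∧
    ∀ m : Fin k, m ≠ i → m ≠ j → ¬ G.Adj (b i j) (a m)

/-- A blockade: a sequence of pairwise disjoint nonempty sets of vertices. -/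
def IsBlockade {V : Type} {t : ℕ} (B : Fin t → Finset V) : Prop :=
  (∀ i, (B i).Nonempty) ∧ ∀ i j, i ≠ j → Disjoint (B i) (B j)

/-- The blockade `B` is rainbow `(k choose 2)`-free: there is no tuple of vertices
lying in pairwise distinct blocks with the `(k choose 2)`-property over the union
of the blocks. -/
def IsRainbowKC2Free {V : Type} (G : SimpleGraph V) {t : ℕ} (B : Fin t → Finset V)
    (k : ℕ) : Prop :=
  ¬ ∃ (a : Fin k → V) (f : Fin k → Fin t), Function.Injective f ∧
      (∀ i, a i ∈ B (f i)) ∧ HasKC2Prop G a {x | ∃ i, x ∈ B i}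

/-!
Split the blocks into a quarter `L`, a quarter `R` and the remaining half `S`. A vertex with a
neighbour `x` in a block of `L` and a neighbour `y` in a block of `R` would witness the
`(2 choose 2)`-property of the rainbow pair `(x, y)`, so every vertex of `S` is anticomplete to `L`
or to `R`; one of these two parts of `S` holds at least half of `S`, i.e. at least `W·n/4` vertices.
-/

open Finset

theorem SimpleGraph.exists_half_anticomplete {V : Type} (G : SimpleGraph V) (L R S : Finset V)
    (h : ∀ v ∈ S, ∀ x ∈ L, ∀ y ∈ R, G.Adj v x → ¬ G.Adj v y) :
    ∃ A S', (A = L ∨ A = R) ∧ S' ⊆ S ∧ #S ≤ 2 * #S' ∧ ∀ x ∈ A, ∀ v ∈ S', ¬ G.Adj x v := by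
  classical
  set SL := S.filter fun v => ∀ x ∈ L, ¬ G.Adj x v
  set SR := S.filter fun v => ¬ ∀ x ∈ L, ¬ G.Adj x v
  have hsplit : #SL + #SR = #S := card_filter_add_card_filter_not _
  by_cases hL : #S ≤ 2 * #SL
  · exact ⟨L, SL, .inl rfl, filter_subset _ _, hL, fun x hx v hv => (mem_filter.mp hv).2 x hx⟩
  refine ⟨R, SR, .inr rfl, filter_subset _ _, by omega, fun y hy v hv hyv => ?_⟩
  obtain ⟨hvS, hvL⟩ := mem_filter.mp hv
  push Not at hvL
  obtain ⟨x, hxL, hxv⟩ := hvL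
  exact h v hvS x hxL y hy hxv.symm hyv.symm

theorem Finset.exists_disjoint_card_eq_card_eq {α : Type} [Fintype α] [DecidableEq α] {a b : ℕ}
    (hab : a + b ≤ Fintype.card α) : ∃ I J : Finset α, Disjoint I J ∧ #I = a ∧ #J = b := by
  obtain ⟨I, -, hI⟩ := exists_subset_card_eq (s := (univ : Finset α)) (n := a) (by simp; omega)
  obtain ⟨J, hJ, hJb⟩ := exists_subset_card_eq (s := Iᶜ) (n := b) (by rw [card_compl]; omega)
  exact ⟨I, J, disjoint_left.mpr fun _ hi hj => mem_compl.mp (hJ hj) hi, hI, hJb⟩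

section Blockade

variable {V : Type} {t : ℕ} {B : Fin t → Finset V}

theorem coe_biUnion_subset_blocks [DecidableEq V] (I : Finset (Fin t)) :
    (↑(I.biUnion B) : Set V) ⊆ {x | ∃ i, x ∈ B i} := fun _ hv =>
  let ⟨i, _, hvi⟩ := mem_biUnion.mp hv
  ⟨i, hvi⟩

theorem IsBlockade.disjoint_biUnion [DecidableEq V] (hB : IsBlockade B) {I J : Finset (Fin t)}
    (hIJ : Disjoint I J) : Disjoint (I.biUnion B) (J.biUnion B) := by
  simp only [disjoint_biUnion_left, disjoint_biUnion_right]
  exact fun j hj i hi => hB.2 i j (hIJ.forall_ne_finset hi hj)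

theorem IsBlockade.mul_card_le_card_biUnion [DecidableEq V] (hB : IsBlockade B) {W : ℕ}
    (hW : ∀ i, W ≤ #(B i)) (I : Finset (Fin t)) : W * #I ≤ #(I.biUnion B) := by
  rw [card_biUnion fun i _ j _ hij => hB.2 i j hij, mul_comm, ← smul_eq_mul]
  exact card_nsmul_le_sum I _ W fun i _ => hW i

variable {G : SimpleGraph V}

/-- The vertex `v` witnesses the `(2 choose 2)`-property of the rainbow pair `(x, y)`. -/
theorem IsRainbowKC2Free.not_adj_of_adj (hfree : IsRainbowKC2Free G B 2)
    {i j k : Fin t} (hij : i ≠ j) {x y v : V} (hx : x ∈ B i) (hy : y ∈ B j) (hv : v ∈ B k)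
    (hvx : G.Adj v x) : ¬ G.Adj v y := by
  intro hvy
  refine hfree ⟨![x, y], ![i, j], ?_, ?_, fun _ _ => v, ?_⟩
  · intro s s' hss'
    fin_cases s <;> fin_cases s' <;> simp_all [eq_comm]
  · intro s
    fin_cases s <;> assumption
  · intro s s' hss'
    obtain rfl : s = 0 := by omega
    obtain rfl : s' = 1 := by omega
    refine ⟨⟨k, hv⟩, hvx, hvy, fun m hm0 hm1 => ?_⟩
    fin_cases m <;> contradiction

theorem IsRainbowKC2Free.exists_anticomplete [DecidableEq V] (hfree : IsRainbowKC2Free G B 2)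
    (hB : IsBlockade B) {W : ℕ} (hW : ∀ i, W ≤ #(B i)) {I J K : Finset (Fin t)}
    (hIJ : Disjoint I J) (hIK : Disjoint I K) (hJK : Disjoint J K) :
    ∃ A C : Finset V,
      (↑A : Set V) ⊆ {x | ∃ i, x ∈ B i} ∧ (↑C : Set V) ⊆ {x | ∃ i, x ∈ B i} ∧
      Disjoint A C ∧ min (W * #I) (W * #J) ≤ #A ∧ W * #K ≤ 2 * #C ∧
      ∀ x ∈ A, ∀ y ∈ C, ¬ G.Adj x y := by
  have hsplit : ∀ v ∈ K.biUnion B, ∀ x ∈ I.biUnion B, ∀ y ∈ J.biUnion B,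
      G.Adj v x → ¬ G.Adj v y := by
    simp only [mem_biUnion]
    rintro v ⟨k, -, hv⟩ x ⟨i, hi, hx⟩ y ⟨j, hj, hy⟩
    exact hfree.not_adj_of_adj (hIJ.forall_ne_finset hi hj) hx hy hv
  obtain ⟨A, C, hA, hCK, hCcard, hAC⟩ := G.exists_half_anticomplete _ _ _ hsplit
  have hAK : (↑A : Set V) ⊆ {x | ∃ i, x ∈ B i} ∧ Disjoint A (K.biUnion B) ∧
      min (W * #I) (W * #J) ≤ #A := by
    rcases hA with rfl | rfl
    · exact ⟨coe_biUnion_subset_blocks I, hB.disjoint_biUnion hIK,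
        min_le_of_left_le (hB.mul_card_le_card_biUnion hW I)⟩
    · exact ⟨coe_biUnion_subset_blocks J, hB.disjoint_biUnion hJK,
        min_le_of_right_le (hB.mul_card_le_card_biUnion hW J)⟩
  exact ⟨A, C, hAK.1, (coe_subset.mpr hCK).trans (coe_biUnion_subset_blocks K),
    hAK.2.1.mono_right hCK, hAK.2.2, (hB.mul_card_le_card_biUnion hW K).trans hCcard, hAC⟩

end Blockade

theorem rainbow_two_free_anticomplete_pair_general {V : Type}
    (G : SimpleGraph V) (n : ℕ) (hn4 : 4 ∣ n)
    (B : Fin n → Finset V) (W : ℕ) (hB : IsBlockade B)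
    (hW : ∀ i, W ≤ (B i).card) (hfree : IsRainbowKC2Free G B 2) :
    ∃ A C : Finset V,
      (↑A : Set V) ⊆ {x | ∃ i, x ∈ B i} ∧ (↑C : Set V) ⊆ {x | ∃ i, x ∈ B i} ∧
      Disjoint A C ∧ W * (n / 4) ≤ A.card ∧ W * (n / 4) ≤ C.card ∧
      ∀ x ∈ A, ∀ y ∈ C, ¬ G.Adj x y := by
  classical
  obtain ⟨q, rfl⟩ := hn4
  obtain ⟨I, J, hIJ, hI, hJ⟩ :=
    exists_disjoint_card_eq_card_eq (α := Fin (4 * q)) (a := q) (b := q) (by simp; omega)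
  have hK : #(I ∪ J)ᶜ = 2 * q := by rw [card_compl, card_union_of_disjoint hIJ]; simp; omega
  obtain ⟨A, C, hA, hC, hAC, hAcard, hCcard, hanti⟩ := hfree.exists_anticomplete hB hW hIJ
    (disjoint_compl_right_iff.mpr subset_union_left)
    (disjoint_compl_right_iff.mpr subset_union_right)
  rw [hI, hJ, min_self] at hAcard
  rw [hK, mul_left_comm] at hCcard
  rw [Nat.mul_div_cancel_left q four_pos]
  exact ⟨A, C, hA, hC, hAC, hAcard, by omega, hanti⟩

/-- Given a rainbow `(2 choose 2)`-free blockade of length `n` (with `4 ∣ n`, `n > 0`)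
and width `W`, there are disjoint subsets `A`, `C` of the union of the blocks, each of
size at least `W·n/4`, with `A` anticomplete to `C`. -/
theorem rainbow_two_free_anticomplete_pair {V : Type} [DecidableEq V]
    (G : SimpleGraph V) (n : ℕ) (hn : 0 < n) (hn4 : 4 ∣ n)
    (B : Fin n → Finset V) (W : ℕ) (hB : IsBlockade B)
    (hW : ∀ i, W ≤ (B i).card) (hfree : IsRainbowKC2Free G B 2) :
    ∃ A C : Finset V,
      (↑A : Set V) ⊆ {x | ∃ i, x ∈ B i} ∧ (↑C : Set V) ⊆ {x | ∃ i, x ∈ B i} ∧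
      Disjoint A C ∧ W * (n / 4) ≤ A.card ∧ W * (n / 4) ≤ C.card ∧
      ∀ x ∈ A, ∀ y ∈ C, ¬ G.Adj x y :=
  rainbow_two_free_anticomplete_pair_general G n hn4 B W hB hW hfree
end

section
/- Let G be a graph and 𝓑 = (B_i : i = 1, ..., t) a rainbow (2 choose 2)-free blockade in G of length t ≥ 4 and width W. Then G has a pure blockade 𝓐 whose pattern is a cograph, of length at least t^{1/10} and width at least W/t. -/
/-- The family of cographs: the smallest family of (finite) graphs containing every
one-vertex graph and closed under complement, disjoint union, and isomorphism. -/
inductive IsCograph : ∀ {V : Type}, SimpleGraph V → Prop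
  | single : IsCograph (⊥ : SimpleGraph (Fin 1))
  | compl {V : Type} {G : SimpleGraph V} : IsCograph G → IsCograph Gᶜ
  | disjUnion {V W : Type} {G : SimpleGraph V} {H : SimpleGraph W} :
      IsCograph G → IsCograph H → IsCograph (G ⊕g H)
  | iso {V W : Type} {G : SimpleGraph V} {H : SimpleGraph W} :
      G ≃g H → IsCograph G → IsCograph H

/-- A pure blockade: a blockade in which every pair of distinct blocks is a pure pair,
i.e. one block is complete or anticomplete to the other. -/
def IsPureBlockade {V : Type} (G : SimpleGraph V) {m : ℕ} (A : Fin m → Finset V) : Prop :=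
  (∀ i, (A i).Nonempty) ∧ (∀ i j, i ≠ j → Disjoint (A i) (A j)) ∧
  ∀ i j, i ≠ j →
    ((∀ x ∈ A i, ∀ y ∈ A j, G.Adj x y) ∨ (∀ x ∈ A i, ∀ y ∈ A j, ¬ G.Adj x y))

/-- The pattern of a pure blockade: `i` and `j` are adjacent iff block `i` is complete
to block `j`. -/
def blockadePattern {V : Type} (G : SimpleGraph V) {m : ℕ} (A : Fin m → Finset V) :
    SimpleGraph (Fin m) :=
  SimpleGraph.fromRel (fun i j => ∀ x ∈ A i, ∀ y ∈ A j, G.Adj x y)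

/-!
Rainbow `(2 choose 2)`-freeness says that all neighbours of a vertex of the blockade that lie
in the blockade belong to a single block `g x`. By pigeonhole each block `B i` keeps a `1/t`
fraction `A i` on which `g` is constant, say equal to `f i`. An edge between `A i` and `A j`
forces `f i = j` and `f j = i`, so the `A i` are pairwise anticomplete except along 2-cycles of
`f`; discarding the larger index of every 2-cycle keeps at least `t / 2 ≥ t ^ (1/10)` blocks,
which form a pure blockade whose pattern is edgeless, hence a cograph.
-/

open Finset

lemma IsRainbowKC2Free.eq_of_adj_of_adj {V : Type} {G : SimpleGraph V} {t : ℕ}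
    {B : Fin t → Finset V} (hfree : IsRainbowKC2Free G B 2) {i j j' : Fin t} {x y y' : V}
    (hx : x ∈ B i) (hy : y ∈ B j) (hy' : y' ∈ B j') (hxy : G.Adj x y) (hxy' : G.Adj x y') :
    j = j' := by
  by_contra hne
  refine hfree ⟨![y, y'], ![j, j'], ?_, ?_, fun _ _ => x, ?_⟩
  · intro u v huv
    fin_cases u <;> fin_cases v <;> simp_all [eq_comm]
  · intro u
    fin_cases u <;> assumption
  · intro u v huv
    obtain rfl : u = 0 := by omega
    obtain rfl : v = 1 := by omega
    refine ⟨⟨i, hx⟩, hxy, hxy', fun m hm0 hm1 => ?_⟩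
    fin_cases m <;> simp_all

lemma IsRainbowKC2Free.exists_neighborBlock {V : Type} {G : SimpleGraph V} {t : ℕ}
    {B : Fin t → Finset V} [NeZero t] (hfree : IsRainbowKC2Free G B 2) :
    ∃ g : V → Fin t, ∀ ⦃i j : Fin t⦄ ⦃x y : V⦄, x ∈ B i → y ∈ B j → G.Adj x y → g x = j := by
  classical
  refine ⟨fun x => if h : ∃ j, ∃ y ∈ B j, G.Adj x y then h.choose else 0, ?_⟩
  intro i j x y hx hy hxy
  have h : ∃ j, ∃ y ∈ B j, G.Adj x y := ⟨j, y, hy, hxy⟩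
  obtain ⟨y', hy', hxy'⟩ := h.choose_spec
  dsimp only
  rw [dif_pos h]
  exact hfree.eq_of_adj_of_adj hx hy' hy hxy' hxy

lemma exists_card_div_le_card_filter_eq {α ι : Type*} [Fintype ι] [Nonempty ι] [DecidableEq ι]
    (s : Finset α) (g : α → ι) : ∃ j, (#s : ℝ) / Fintype.card ι ≤ #{x ∈ s | g x = j} := by
  obtain ⟨j, -, hj⟩ := exists_le_card_fiber_of_nsmul_le_card_of_maps_to
    (fun x _ => mem_univ (g x)) univ_nonempty (b := (#s : ℝ) / Fintype.card ι)
    (by rw [card_univ, nsmul_eq_mul, mul_div_cancel₀ _ (by positivity)])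
  exact ⟨j, hj⟩

lemma IsRainbowKC2Free.exists_large_subblocks_adj_imp_eq {V : Type} {G : SimpleGraph V}
    {t : ℕ} {B : Fin t → Finset V} [NeZero t] (hfree : IsRainbowKC2Free G B 2) :
    ∃ (f : Fin t → Fin t) (A : Fin t → Finset V), (∀ i, A i ⊆ B i) ∧
      (∀ i, (#(B i) : ℝ) / t ≤ #(A i)) ∧
      ∀ ⦃i j : Fin t⦄ ⦃x y : V⦄, x ∈ A i → y ∈ A j → G.Adj x y → f i = j := by
  classical
  obtain ⟨g, hg⟩ := hfree.exists_neighborBlock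
  have hfiber (i : Fin t) : ∃ j, (#(B i) : ℝ) / t ≤ #{x ∈ B i | g x = j} := by
    simpa using exists_card_div_le_card_filter_eq (B i) g
  choose f hf using hfiber
  refine ⟨f, fun i => {x ∈ B i | g x = f i}, fun i => filter_subset _ _, hf, ?_⟩
  intro i j x y hx hy hxy
  rw [mem_filter] at hx hy
  exact hx.2 ▸ hg hx.1 hy.1 hxy

lemma Function.exists_large_finset_without_two_cycle {α : Type*} [Fintype α] [LinearOrder α]
    (f : α → α) :
    ∃ S : Finset α, Fintype.card α ≤ 2 * #S ∧ ∀ i ∈ S, ∀ j ∈ S, f i = j → f j = i → i = j := by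
  classical
  set S : Finset α := {i | ¬ (f (f i) = i ∧ f i < i)}
  refine ⟨S, ?_, ?_⟩
  · have hcompl : #Sᶜ ≤ #S := by
      refine card_le_card_of_injOn f (fun i hi => ?_) (fun i hi i' hi' hii' => ?_)
      · simp only [S, coe_compl, coe_filter, mem_univ, true_and, Set.mem_compl_iff,
          Set.mem_ofPred_eq, not_not] at hi ⊢
        -- `f` maps the discarded indices injectively into `S`
        rw [hi.1]
        exact fun h => lt_asymm h.2 hi.2
      · simp only [S, coe_compl, coe_filter, mem_univ, true_and, Set.mem_compl_iff,
          Set.mem_ofPred_eq, not_not] at hi hi'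
        rw [← hi.1, hii', hi'.1]
    have := card_add_card_compl S
    omega
  · rintro i hi j hj rfl hji
    simp only [S, mem_filter, mem_univ, true_and, not_and, not_lt] at hi hj
    rw [hji] at hj
    exact le_antisymm (hi hji) (hj rfl)

lemma SimpleGraph.bot_sum_bot {α β : Type*} :
    (⊥ : SimpleGraph α) ⊕g (⊥ : SimpleGraph β) = ⊥ := by
  ext (x | x) (y | y) <;> simp [SimpleGraph.sum_adj]

lemma isCograph_bot_fin_succ (n : ℕ) : IsCograph (⊥ : SimpleGraph (Fin (n + 1))) := by
  induction n with
  | zero => exact .single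
  | succ n ih =>
    have h := IsCograph.disjUnion ih .single
    rw [SimpleGraph.bot_sum_bot] at h
    exact h.iso ⟨finSumFinEquiv, by simp⟩

lemma isCograph_bot (α : Type) [Finite α] [Nonempty α] : IsCograph (⊥ : SimpleGraph α) := by
  obtain ⟨n, ⟨e⟩⟩ := Finite.exists_equiv_fin α
  obtain ⟨n, rfl⟩ := Nat.exists_eq_succ_of_ne_zero (n := n) fun h => by
    subst h; exact (e.isEmpty_congr.mpr inferInstance).false (Classical.arbitrary α)
  exact (isCograph_bot_fin_succ n).iso ⟨e.symm, by simp⟩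

lemma exists_pureBlockade_of_pairwise_anticomplete {V ι : Type}
    (G : SimpleGraph V) (A : ι → Finset V) (S : Finset ι)
    (hne : ∀ i ∈ S, (A i).Nonempty)
    (hdisj : ∀ i ∈ S, ∀ j ∈ S, i ≠ j → Disjoint (A i) (A j))
    (hanti : ∀ i ∈ S, ∀ j ∈ S, i ≠ j → ∀ x ∈ A i, ∀ y ∈ A j, ¬ G.Adj x y) :
    ∃ A' : Fin #S → Finset V,
      IsPureBlockade G A' ∧ blockadePattern G A' = ⊥ ∧ ∀ k, ∃ i ∈ S, A' k = A i := by
  set e : Fin #S → ι := fun k => S.equivFin.symm k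
  have he : ∀ k, e k ∈ S := fun k => (S.equivFin.symm k).2
  have he_inj : e.Injective := Subtype.val_injective.comp S.equivFin.symm.injective
  have hanti' : ∀ k l, k ≠ l → ∀ x ∈ A (e k), ∀ y ∈ A (e l), ¬ G.Adj x y :=
    fun k l hkl => hanti _ (he k) _ (he l) (he_inj.ne hkl)
  refine ⟨fun k => A (e k), ⟨fun k => hne _ (he k),
    fun k l hkl => hdisj _ (he k) _ (he l) (he_inj.ne hkl),
    fun k l hkl => .inr (hanti' k l hkl)⟩, ?_, fun k => ⟨e k, he k, rfl⟩⟩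
  ext k l
  simp only [blockadePattern, SimpleGraph.fromRel_adj, SimpleGraph.bot_adj, iff_false]
  rintro ⟨hkl, hcomp | hcomp⟩
  · obtain ⟨x, hx⟩ := hne _ (he k)
    obtain ⟨y, hy⟩ := hne _ (he l)
    exact hanti' k l hkl x hx y hy (hcomp x hx y hy)
  · obtain ⟨x, hx⟩ := hne _ (he l)
    obtain ⟨y, hy⟩ := hne _ (he k)
    exact hanti' l k (Ne.symm hkl) x hx y hy (hcomp x hx y hy)

lemma rpow_one_div_ten_le_half {x : ℝ} (hx : 4 ≤ x) : x ^ (1 / 10 : ℝ) ≤ x / 2 :=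
  calc x ^ (1 / 10 : ℝ) ≤ x ^ (1 / 2 : ℝ) :=
        Real.rpow_le_rpow_of_exponent_le (by linarith) (by norm_num)
    _ = √x := (Real.sqrt_eq_rpow x).symm
    _ ≤ x / 2 := Real.sqrt_le_iff.mpr ⟨by linarith, by nlinarith⟩

/-- If `G` has a rainbow `(2 choose 2)`-free blockade of length `t ≥ 4` and width `W`,
then `G` has a pure blockade with a cograph pattern, of length at least `t^(1/10)` and
width at least `W / t`. -/
theorem rainbow_two_free_pure_blockade_general {V : Type} (G : SimpleGraph V)
    (t : ℕ) (ht : 4 ≤ t) (B : Fin t → Finset V) (W : ℕ)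
    (hB : IsBlockade B) (hW : ∀ i, W ≤ (B i).card)
    (hfree : IsRainbowKC2Free G B 2) :
    ∃ (m : ℕ) (A : Fin m → Finset V),
      (t : ℝ) ^ ((1 : ℝ) / 10) ≤ (m : ℝ) ∧
      IsPureBlockade G A ∧ IsCograph (blockadePattern G A) ∧
      ∀ i, (W : ℝ) / (t : ℝ) ≤ ((A i).card : ℝ) := by
  have : NeZero t := ⟨by omega⟩
  have ht₀ : (0 : ℝ) < t := by positivity
  obtain ⟨f, A, hAB, hAcard, hAf⟩ := hfree.exists_large_subblocks_adj_imp_eq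
  obtain ⟨S, hS, hSf⟩ := Function.exists_large_finset_without_two_cycle f
  rw [Fintype.card_fin] at hS
  have hAne (i : Fin t) : (A i).Nonempty := card_pos.mp <| by
    exact_mod_cast (div_pos (by exact_mod_cast (hB.1 i).card_pos) ht₀).trans_le (hAcard i)
  obtain ⟨A', hA', hpat, hA'A⟩ := exists_pureBlockade_of_pairwise_anticomplete G A S
    (fun i _ => hAne i) (fun i _ j _ hij => (hB.2 i j hij).mono (hAB i) (hAB j))
    (fun i hi j hj hij x hx y hy hxy =>
      hij (hSf i hi j hj (hAf hx hy hxy) (hAf hy hx hxy.symm)))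
  refine ⟨#S, A', ?_, hA', ?_, fun k => ?_⟩
  · have : (t : ℝ) ≤ 2 * #S := by exact_mod_cast hS
    linarith [rpow_one_div_ten_le_half (x := t) (by exact_mod_cast ht)]
  · have : Nonempty (Fin #S) := ⟨⟨0, by omega⟩⟩
    exact hpat ▸ isCograph_bot _
  · obtain ⟨i, -, hki⟩ := hA'A k
    rw [hki]
    calc (W : ℝ) / t ≤ #(B i) / t := by gcongr; exact_mod_cast hW i
      _ ≤ #(A i) := hAcard i
end
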